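/- arXiv:1309.3319 — 4 statements merged into one kernel-verified Lean document; each statement's English description precedes it below -/
import Mathlib

section
/- Define two requests (i,j) and (k,ℓ) on ordered node identifiers to intersect iff exactly one of k, ℓ lies strictly between i and j. In any binary search tree T on node set {1,…,n}, if (i,j) is an edge of T and (i,j) intersects (k,ℓ), then (k,ℓ) is not an edge of T. -/
/-- Binary trees with natural-number keys. -/
inductive BTree where
  | leaf : BTree
  | node : BTree → ℕ → BTree → BTree

/-- In-order traversal of a binary tree. -/
def BTree.inorder : BTree → List ℕ
  | .leaf => []
  | .node l v r => l.inorder ++ v :: r.inorder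

/-- The key at the root, if any. -/
def BTree.root? : BTree → Option ℕ
  | .leaf => none
  | .node _ v _ => some v

/-- The (parent, child) edges of a binary tree. -/
def BTree.edges : BTree → List (ℕ × ℕ)
  | .leaf => []
  | .node l v r =>
      (l.root?.toList.map fun w => (v, w)) ++
      (r.root?.toList.map fun w => (v, w)) ++ l.edges ++ r.edges

/-- `u` and `v` are joined by a (parent-child) edge of `t`. -/
def BTree.IsEdge (t : BTree) (u v : ℕ) : Prop :=
  (u, v) ∈ t.edges ∨ (v, u) ∈ t.edges

/-- `t` is a binary search tree on `{1,…,n}`: its in-order traversal is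
`1, 2, …, n`. -/
def IsBST (n : ℕ) (t : BTree) : Prop := t.inorder = List.range' 1 n

/-- Requests `(i,j)` and `(k,l)` intersect: exactly one of `k, l` lies
strictly between `i` and `j`. -/
def Intersects (i j k l : ℕ) : Prop :=
  (min i j < k ∧ k < max i j ∧ ¬(min i j ≤ l ∧ l ≤ max i j)) ∨
  (¬(min i j ≤ k ∧ k ≤ max i j) ∧ min i j < l ∧ l < max i j)

/- Induct on the tree and split it at its root `c`. The left subtree together with the edge
from `c` to its root has all keys `≤ c`, the right part all keys `≥ c`, so edges from different
parts cannot cross. Within one part only the edge `(c, w)` to the subtree's root needs checking: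
if it crossed an edge of the subtree, `c` or `w` would lie strictly between that edge's
endpoints, impossible since the subtree lies on one side of `c` and its root `w` separates its
own left and right parts. -/

lemma Intersects.symm {i j k l : ℕ} (h : Intersects i j k l) : Intersects k l i j := by
  unfold Intersects at *; omega

lemma intersects_swap_left {i j k l : ℕ} : Intersects j i k l ↔ Intersects i j k l := by
  unfold Intersects; omega

lemma intersects_swap_right {i j k l : ℕ} : Intersects i j l k ↔ Intersects i j k l := by
  unfold Intersects; omega

lemma Intersects.exists_endpoint_between {i j k l : ℕ} (h : Intersects i j k l) :
    (min k l < i ∧ i < max k l) ∨ (min k l < j ∧ j < max k l) := by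
  unfold Intersects at h; omega

lemma not_intersects_of_le_of_le {i j k l c : ℕ} (hi : i ≤ c) (hj : j ≤ c) (hk : c ≤ k)
    (hl : c ≤ l) : ¬ Intersects i j k l := by
  unfold Intersects; omega

namespace BTree

def edgesWithParent (t : BTree) (p : ℕ) : List (ℕ × ℕ) :=
  (t.root?.toList.map fun w => (p, w)) ++ t.edges

lemma mem_edgesWithParent {t : BTree} {p u v : ℕ} :
    (u, v) ∈ t.edgesWithParent p ↔ (u = p ∧ t.root? = some v) ∨ (u, v) ∈ t.edges := by
  simp only [edgesWithParent, List.mem_append, List.mem_map, Option.mem_toList, Prod.mk.injEq,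
    exists_eq_right_right]
  tauto

lemma mem_edges_node {l r : BTree} {c u v : ℕ} :
    (u, v) ∈ (node l c r).edges ↔
      (u, v) ∈ l.edgesWithParent c ∨ (u, v) ∈ r.edgesWithParent c := by
  simp only [edges, edgesWithParent, List.mem_append]
  tauto

lemma mem_inorder_of_root?_eq_some {t : BTree} {w : ℕ} (h : t.root? = some w) :
    w ∈ t.inorder := by
  cases t with
  | leaf => simp [root?] at h
  | node l v r => simp_all [root?, inorder]

lemma mem_inorder_of_mem_edges {t : BTree} {u v : ℕ} (h : (u, v) ∈ t.edges) :
    u ∈ t.inorder ∧ v ∈ t.inorder := by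
  induction t with
  | leaf => simp [edges] at h
  | node l c r ihl ihr =>
    simp only [inorder, List.mem_append, List.mem_cons]
    rcases mem_edges_node.1 h with h | h <;> rcases mem_edgesWithParent.1 h with
      ⟨rfl, hv⟩ | h
    · exact ⟨by simp, .inl (mem_inorder_of_root?_eq_some hv)⟩
    · have := ihl h; tauto
    · exact ⟨by simp, .inr (.inr (mem_inorder_of_root?_eq_some hv))⟩
    · have := ihr h; tauto

lemma mem_cons_inorder_of_mem_edgesWithParent {t : BTree} {p u v : ℕ}
    (h : (u, v) ∈ t.edgesWithParent p) : u ∈ p :: t.inorder ∧ v ∈ p :: t.inorder := by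
  rcases mem_edgesWithParent.1 h with ⟨rfl, hv⟩ | h
  · exact ⟨List.mem_cons_self, List.mem_cons_of_mem _ (mem_inorder_of_root?_eq_some hv)⟩
  · exact (mem_inorder_of_mem_edges h).imp (List.mem_cons_of_mem _) (List.mem_cons_of_mem _)

lemma pairwise_lt_inorder_node {l r : BTree} {c : ℕ}
    (h : (node l c r).inorder.Pairwise (· < ·)) :
    l.inorder.Pairwise (· < ·) ∧ r.inorder.Pairwise (· < ·) ∧
      (∀ x ∈ l.inorder, x < c) ∧ (∀ x ∈ r.inorder, c < x) := by
  simp only [inorder, List.pairwise_append, List.pairwise_cons, List.mem_cons] at h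
  exact ⟨h.1, h.2.1.2, fun x hx => h.2.2 x hx c (.inl rfl), h.2.1.1⟩

lemma forall_of_mem_edgesWithParent {t : BTree} {p u v : ℕ} {P : ℕ → Prop}
    (hp : P p) (ht : ∀ x ∈ t.inorder, P x) (h : (u, v) ∈ t.edgesWithParent p) : P u ∧ P v := by
  have key : ∀ x ∈ p :: t.inorder, P x := List.forall_mem_cons.2 ⟨hp, ht⟩
  exact (mem_cons_inorder_of_mem_edgesWithParent h).imp (key u) (key v)

lemma not_lt_root_lt_of_mem_edges {t : BTree} (hs : t.inorder.Pairwise (· < ·)) {w k l : ℕ}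
    (hw : t.root? = some w) (h : (k, l) ∈ t.edges) : ¬ (min k l < w ∧ w < max k l) := by
  cases t with
  | leaf => simp [root?] at hw
  | node L c R =>
    obtain rfl : c = w := by simpa [root?] using hw
    obtain ⟨-, -, hLc, hcR⟩ := pairwise_lt_inorder_node hs
    rcases mem_edges_node.1 h with h | h
    · have := forall_of_mem_edgesWithParent (P := (· ≤ c)) le_rfl (fun x hx => (hLc x hx).le) h
      omega
    · have := forall_of_mem_edgesWithParent (P := (c ≤ ·)) le_rfl (fun x hx => (hcR x hx).le) h
      omega

lemma not_intersects_of_mem_edgesWithParent {t : BTree} (hs : t.inorder.Pairwise (· < ·))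
    {c : ℕ} (hside : (∀ x ∈ t.inorder, x < c) ∨ (∀ x ∈ t.inorder, c < x))
    (ih : ∀ {u v k l : ℕ}, (u, v) ∈ t.edges → (k, l) ∈ t.edges → ¬ Intersects u v k l)
    {u v k l : ℕ} (huv : (u, v) ∈ t.edgesWithParent c) (hkl : (k, l) ∈ t.edgesWithParent c) :
    ¬ Intersects u v k l := by
  have parent_edge : ∀ {w k l : ℕ}, t.root? = some w → (k, l) ∈ t.edges →
      ¬ Intersects c w k l := by
    intro w k l hw hkl hX
    have hk := (mem_inorder_of_mem_edges hkl).1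
    have hl := (mem_inorder_of_mem_edges hkl).2
    rcases hX.exists_endpoint_between with hc | hw'
    · rcases hside with h | h <;> have := h k hk <;> have := h l hl <;> omega
    · exact not_lt_root_lt_of_mem_edges hs hw hkl hw'
  rw [mem_edgesWithParent] at huv hkl
  rcases huv with ⟨rfl, hv⟩ | huv <;> rcases hkl with ⟨rfl, hl⟩ | hkl
  · obtain rfl : v = l := Option.some_injective _ (hv.symm.trans hl)
    intro hX
    have := hX.exists_endpoint_between
    omega
  · exact parent_edge hv hkl
  · exact fun hX => parent_edge hl huv hX.symm
  · exact ih huv hkl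

theorem not_intersects_of_mem_edges {t : BTree} (hs : t.inorder.Pairwise (· < ·)) {u v k l : ℕ}
    (huv : (u, v) ∈ t.edges) (hkl : (k, l) ∈ t.edges) : ¬ Intersects u v k l := by
  induction t generalizing u v k l with
  | leaf => simp [edges] at huv
  | node L c R ihL ihR =>
    obtain ⟨hL, hR, hLc, hcR⟩ := pairwise_lt_inorder_node hs
    have left {u v : ℕ} (h : (u, v) ∈ L.edgesWithParent c) : u ≤ c ∧ v ≤ c :=
      forall_of_mem_edgesWithParent (P := (· ≤ c)) le_rfl (fun x hx => (hLc x hx).le) h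
    have right {u v : ℕ} (h : (u, v) ∈ R.edgesWithParent c) : c ≤ u ∧ c ≤ v :=
      forall_of_mem_edgesWithParent (P := (c ≤ ·)) le_rfl (fun x hx => (hcR x hx).le) h
    rcases mem_edges_node.1 huv with huv | huv <;> rcases mem_edges_node.1 hkl with hkl | hkl
    · exact not_intersects_of_mem_edgesWithParent hL (.inl hLc) (ihL hL) huv hkl
    · exact not_intersects_of_le_of_le (left huv).1 (left huv).2 (right hkl).1 (right hkl).2
    · exact fun hX => not_intersects_of_le_of_le (left hkl).1 (left hkl).2 (right huv).1
        (right huv).2 hX.symm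
    · exact not_intersects_of_mem_edgesWithParent hR (.inr hcR) (ihR hR) huv hkl

theorem IsEdge.not_intersects {t : BTree} (hs : t.inorder.Pairwise (· < ·)) {i j k l : ℕ}
    (hij : t.IsEdge i j) (hkl : t.IsEdge k l) : ¬ Intersects i j k l := by
  rcases hij with hij | hij <;> rcases hkl with hkl | hkl
  · exact not_intersects_of_mem_edges hs hij hkl
  · rw [← intersects_swap_right]; exact not_intersects_of_mem_edges hs hij hkl
  · rw [← intersects_swap_left]; exact not_intersects_of_mem_edges hs hij hkl
  · rw [← intersects_swap_left, ← intersects_swap_right]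
    exact not_intersects_of_mem_edges hs hij hkl

end BTree

/-- In any BST on `{1,…,n}`, if `(i,j)` is an edge and `(i,j)` intersects
`(k,l)`, then `(k,l)` is not an edge. -/
theorem stmt_6 (n : ℕ) (t : BTree) (i j k l : ℕ)
    (hB : IsBST n t) (hij : t.IsEdge i j) (hX : Intersects i j k l) :
    ¬ t.IsEdge k l :=
  fun hkl => hij.not_intersects (hB ▸ List.pairwise_lt_range') hkl hX
end

section
/- Let σ be a set of pairwise non-intersecting requests forming a perfect matching on {1,…,n} (n even). Then there exists a binary search tree T on {1,…,n} such that every matched pair (u,v) ∈ σ is an edge of T. -/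
/-!
The partner `m` of the smallest point `lo` splits a non-crossing matching of `[lo, hi)`: every
other pair lies either strictly between `lo` and `m` or strictly to the right of `m`. Search
trees `t₁` on `(lo, m)` and `t₂` on `(m, hi)` built recursively are then assembled into the
search tree `node leaf lo (node t₁ m t₂)` on `[lo, hi)`, which has the edge `lo — m` and every
edge of `t₁` and `t₂`.
-/

namespace BTree

variable {l r r' : BTree} {v u w : ℕ}

theorem IsEdge.node_left (h : l.IsEdge u w) : (node l v r).IsEdge u w := by
  rcases h with h | h <;> simp_all [IsEdge, edges]

theorem IsEdge.node_right (h : r.IsEdge u w) : (node l v r).IsEdge u w := by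
  rcases h with h | h <;> simp_all [IsEdge, edges]

theorem isEdge_node_node_right : (node l v (node r w r')).IsEdge v w :=
  Or.inl (by simp [edges, root?])

end BTree

theorem List.range'_eq_cons_append_cons {lo m hi : ℕ} (hlo : lo < m) (hhi : m < hi) :
    List.range' lo (hi - lo) =
      lo :: (List.range' (lo + 1) (m - (lo + 1)) ++ m :: List.range' (m + 1) (hi - (m + 1))) := by
  obtain ⟨k, rfl⟩ : ∃ k, m = lo + 1 + k := ⟨m - (lo + 1), by omega⟩
  obtain ⟨j, rfl⟩ : ∃ j, hi = lo + 1 + k + 1 + j := ⟨hi - (lo + 1 + k + 1), by omega⟩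
  rw [show lo + 1 + k + 1 + j - lo = k + (j + 1) + 1 by omega, show lo + 1 + k - (lo + 1) = k by omega,
    show lo + 1 + k + 1 + j - (lo + 1 + k + 1) = j by omega, List.range'_succ,
    ← List.range'_append_1, List.range'_succ (s := lo + 1 + k)]

structure IsNoncrossingMatching (lo hi : ℕ) (M : Finset (ℕ × ℕ)) : Prop where
  bounds : ∀ p ∈ M, lo ≤ p.1 ∧ p.1 < p.2 ∧ p.2 < hi
  existsUnique : ∀ x, lo ≤ x → x < hi → ∃! p, p ∈ M ∧ (x = p.1 ∨ x = p.2)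
  not_intersects : ∀ p ∈ M, ∀ q ∈ M, p ≠ q → ¬ Intersects p.1 p.2 q.1 q.2

namespace IsNoncrossingMatching

variable {lo hi : ℕ} {M : Finset (ℕ × ℕ)}

theorem eq_of_endpoint (hM : IsNoncrossingMatching lo hi M) {p q : ℕ × ℕ} (hp : p ∈ M)
    (hq : q ∈ M) {x : ℕ} (hxp : x = p.1 ∨ x = p.2) (hxq : x = q.1 ∨ x = q.2) : p = q := by
  have := hM.bounds p hp
  obtain ⟨r, -, hr⟩ := hM.existsUnique x (by omega) (by omega)
  exact (hr p ⟨hp, hxp⟩).trans (hr q ⟨hq, hxq⟩).symm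

theorem nested_or_disjoint (hM : IsNoncrossingMatching lo hi M) {p q : ℕ × ℕ}
    (hp : p ∈ M) (hq : q ∈ M) (hpq : p ≠ q) :
    (p.1 < q.1 ∧ q.2 < p.2) ∨ (q.1 < p.1 ∧ p.2 < q.2) ∨ q.2 < p.1 ∨ p.2 < q.1 := by
  have hdisjoint : ∀ x, (x = p.1 ∨ x = p.2) → x ≠ q.1 ∧ x ≠ q.2 := fun x hxp =>
    ⟨fun h => hpq (hM.eq_of_endpoint hp hq hxp (.inl h)),
      fun h => hpq (hM.eq_of_endpoint hp hq hxp (.inr h))⟩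
  have := hdisjoint p.1 (.inl rfl)
  have := hdisjoint p.2 (.inr rfl)
  have := hM.bounds p hp
  have := hM.bounds q hq
  have := hM.not_intersects p hp q hq hpq
  simp only [Intersects] at this
  omega

theorem restrict (hM : IsNoncrossingMatching lo hi M) {lo' hi' : ℕ} (hlo : lo ≤ lo')
    (hhi : hi' ≤ hi)
    (hclosed : ∀ q ∈ M, ∀ x, (x = q.1 ∨ x = q.2) → lo' ≤ x → x < hi' → lo' ≤ q.1 ∧ q.2 < hi') :
    IsNoncrossingMatching lo' hi' (M.filter fun q => lo' ≤ q.1 ∧ q.2 < hi') where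
  bounds q hq := by
    rw [Finset.mem_filter] at hq
    have := hM.bounds q hq.1
    omega
  existsUnique x hx₁ hx₂ := by
    obtain ⟨p, ⟨hp, hxp⟩, huniq⟩ := hM.existsUnique x (by omega) (by omega)
    refine ⟨p, ⟨Finset.mem_filter.2 ⟨hp, hclosed p hp x hxp hx₁ hx₂⟩, hxp⟩, ?_⟩
    rintro q ⟨hq, hxq⟩
    exact huniq q ⟨(Finset.mem_filter.1 hq).1, hxq⟩
  not_intersects p hp q hq :=
    hM.not_intersects p (Finset.mem_filter.1 hp).1 q (Finset.mem_filter.1 hq).1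

theorem exists_partner_lo_split (hM : IsNoncrossingMatching lo hi M) (h : lo < hi) :
    ∃ p ∈ M, p.1 = lo ∧
      ∀ q ∈ M, q ≠ p → (lo + 1 ≤ q.1 ∧ q.2 < p.2) ∨ (p.2 + 1 ≤ q.1 ∧ q.2 < hi) := by
  obtain ⟨p, ⟨hp, hlo⟩, -⟩ := hM.existsUnique lo le_rfl h
  have := hM.bounds p hp
  refine ⟨p, hp, by omega, fun q hq hqp => ?_⟩
  have := hM.bounds q hq
  have := hM.nested_or_disjoint hp hq (Ne.symm hqp)
  omega

theorem exists_inorder_eq_range' (hM : IsNoncrossingMatching lo hi M) :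
    ∃ t : BTree, t.inorder = List.range' lo (hi - lo) ∧ ∀ p ∈ M, t.IsEdge p.1 p.2 := by
  induction hlen : hi - lo using Nat.strong_induction_on generalizing lo hi M with
  | _ len ih =>
    subst hlen
    by_cases hempty : hi ≤ lo
    · refine ⟨.leaf, by simp [BTree.inorder, Nat.sub_eq_zero_of_le hempty], fun p hp => ?_⟩
      have := hM.bounds p hp
      omega
    obtain ⟨p, hp, hp₁, hside⟩ := hM.exists_partner_lo_split (not_le.1 hempty)
    have := hM.bounds p hp
    set m := p.2
    have hne : ∀ q ∈ M, ∀ x, (x = q.1 ∨ x = q.2) → lo < x → x ≠ m → q ≠ p := by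
      rintro q - x hx hlx hxm rfl
      omega
    have hleft : IsNoncrossingMatching (lo + 1) m (M.filter fun q => lo + 1 ≤ q.1 ∧ q.2 < m) :=
      hM.restrict (by omega) (by omega) fun q hq x hx h₁ h₂ => by
        have := hside q hq (hne q hq x hx (by omega) (by omega))
        omega
    have hright : IsNoncrossingMatching (m + 1) hi (M.filter fun q => m + 1 ≤ q.1 ∧ q.2 < hi) :=
      hM.restrict (by omega) le_rfl fun q hq x hx h₁ h₂ => by
        have := hside q hq (hne q hq x hx (by omega) (by omega))
        have := hM.bounds q hq
        omega
    obtain ⟨t₁, ht₁, he₁⟩ := ih _ (by omega) hleft rfl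
    obtain ⟨t₂, ht₂, he₂⟩ := ih _ (by omega) hright rfl
    refine ⟨.node .leaf lo (.node t₁ m t₂), ?_, fun q hq => ?_⟩
    · simp only [BTree.inorder, List.nil_append, ht₁, ht₂]
      exact (List.range'_eq_cons_append_cons (by omega) (by omega)).symm
    · by_cases hqp : q = p
      · subst hqp
        rw [hp₁]
        exact BTree.isEdge_node_node_right
      rcases hside q hq hqp with h | h
      · exact (he₁ q (Finset.mem_filter.2 ⟨hq, h⟩)).node_left.node_right
      · exact (he₂ q (Finset.mem_filter.2 ⟨hq, h⟩)).node_right.node_right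

end IsNoncrossingMatching

theorem stmt_8_general (n : ℕ) (M : Finset (ℕ × ℕ))
    (horder : ∀ p ∈ M, p.1 < p.2)
    (hrange : ∀ p ∈ M, 1 ≤ p.1 ∧ p.2 ≤ n)
    (hcover : ∀ x, 1 ≤ x → x ≤ n → ∃! p, p ∈ M ∧ (x = p.1 ∨ x = p.2))
    (hni : ∀ p ∈ M, ∀ q ∈ M, p ≠ q → ¬ Intersects p.1 p.2 q.1 q.2) :
    ∃ t : BTree, IsBST n t ∧ ∀ p ∈ M, t.IsEdge p.1 p.2 := by
  have hM : IsNoncrossingMatching 1 (n + 1) M :=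
    ⟨fun p hp => ⟨(hrange p hp).1, horder p hp, Nat.lt_succ_of_le (hrange p hp).2⟩,
      fun x hx1 hx2 => hcover x hx1 (Nat.le_of_lt_succ hx2), hni⟩
  simpa [IsBST] using hM.exists_inorder_eq_range'

/-- If `σ` (here `M`) is a perfect matching on `{1,…,n}` whose requests are
pairwise non-intersecting, then there is a single BST on `{1,…,n}` in which
every matched pair is an edge. -/
theorem stmt_8 (n : ℕ) (hn : 2 ∣ n) (M : Finset (ℕ × ℕ))
    (horder : ∀ p ∈ M, p.1 < p.2)
    (hrange : ∀ p ∈ M, 1 ≤ p.1 ∧ p.2 ≤ n)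
    (hcover : ∀ x, 1 ≤ x → x ≤ n → ∃! p, p ∈ M ∧ (x = p.1 ∨ x = p.2))
    (hni : ∀ p ∈ M, ∀ q ∈ M, p ≠ q → ¬ Intersects p.1 p.2 q.1 q.2) :
    ∃ t : BTree, IsBST n t ∧ ∀ p ∈ M, t.IsEdge p.1 p.2 :=
  stmt_8_general n M horder hrange hcover hni
end

section
/- Consider the 'laminated' tree structure on {1,…,n} (n divisible by 4) with edge sets E₁ = {{i, n/2−i+1} : 1 ≤ i ≤ n/4} ∪ {{n/2−i, i+2} : 0 ≤ i ≤ n/4−2} ∪ {{n/2+i, n−i} : 0 ≤ i ≤ n/4−1} ∪ {{n−i, n/2+1+i} : 0 ≤ i ≤ n/4−1} and E₂ = {{i, n−i+1} : 1 ≤ i ≤ n/2} ∪ {{n−i, i+2} : 0 ≤ i ≤ n/2−2}. Then for every interval I = [x, x+ℓ] with n/8 < ℓ < n/4, the number of edges in E₁ ∪ E₂ with exactly one endpoint in I is Ω(ℓ). -/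
/-- The edge set `E₁` of the first laminated tree. -/
def E1 (n : ℕ) : Finset (ℕ × ℕ) :=
  ((Finset.Icc 1 (n / 4)).image fun i => (i, n / 2 - i + 1)) ∪
  ((Finset.Icc 0 (n / 4 - 2)).image fun i => (n / 2 - i, i + 2)) ∪
  ((Finset.Icc 0 (n / 4 - 1)).image fun i => (n / 2 + i, n - i)) ∪
  ((Finset.Icc 0 (n / 4 - 1)).image fun i => (n - i, n / 2 + 1 + i))

/-- The edge set `E₂` of the second laminated tree. -/
def E2 (n : ℕ) : Finset (ℕ × ℕ) :=
  ((Finset.Icc 1 (n / 2)).image fun i => (i, n - i + 1)) ∪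
  ((Finset.Icc 0 (n / 2 - 2)).image fun i => (n - i, i + 2))

/-!
Every vertex of `[1, n]` is joined by an edge of `E₂` to its mirror image `n + 1 - i`, so an
interval inside one half of `[1, n]` cuts one such edge per vertex. An interval `[x, x + ℓ]`
crossing the midpoint `n/2` with `ℓ < n/4` lies inside `(n/4, 3n/4)`; there the two reflection
families of `E₁`, `i ↦ n/2 + 1 - i` on `[1, n/2]` and `i ↦ 3n/2 - i` on `[n/2, n]`, send the left
part `[x, n/2]` and the right part `[n/2 + 1, x + ℓ]` outside the interval. Either way the
interval cuts at least `ℓ + 1` edges, so `c = 1` works.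
-/

section Cut

variable {α : Type*} [DecidableEq α]

def IsCut (I : Finset α) (e : α × α) : Prop :=
  (e.1 ∈ I ∧ e.2 ∉ I) ∨ (e.1 ∉ I ∧ e.2 ∈ I)

instance (I : Finset α) : DecidablePred (IsCut I) :=
  fun _ => inferInstanceAs (Decidable (_ ∨ _))

def cutEdges (E : Finset (α × α)) (I : Finset α) : Finset (α × α) :=
  E.filter (IsCut I)

variable {E : Finset (α × α)} {I s : Finset α} {g : α → α}

theorem card_le_card_cutEdges_of_fst (hE : ∀ a ∈ s, (a, g a) ∈ E)
    (hcut : ∀ a ∈ s, IsCut I (a, g a)) : s.card ≤ (cutEdges E I).card :=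
  Finset.card_le_card_of_injOn (fun a => (a, g a))
    (fun a ha => Finset.mem_filter.mpr ⟨hE a ha, hcut a ha⟩)
    (fun _ _ _ _ h => congrArg Prod.fst h)

theorem card_le_card_cutEdges_of_snd (hE : ∀ b ∈ s, (g b, b) ∈ E)
    (hcut : ∀ b ∈ s, IsCut I (g b, b)) : s.card ≤ (cutEdges E I).card :=
  Finset.card_le_card_of_injOn (fun b => (g b, b))
    (fun b hb => Finset.mem_filter.mpr ⟨hE b hb, hcut b hb⟩)
    (fun _ _ _ _ h => congrArg Prod.snd h)

end Cut

section Laminated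

variable {m i j : ℕ}

theorem mem_E2_of_add_eq (hi : 1 ≤ i) (hi' : i ≤ 2 * m) (hij : i + j = 4 * m + 1) :
    (i, j) ∈ E2 (4 * m) := by
  refine Finset.mem_union_left _ (Finset.mem_image.mpr ⟨i, ?_, ?_⟩)
  · simp only [Finset.mem_Icc]
    omega
  · simp only [Prod.mk.injEq, true_and]
    omega

theorem mem_E1_of_add_eq_left (hi : 1 ≤ i) (hi' : i ≤ m) (hij : i + j = 2 * m + 1) :
    (i, j) ∈ E1 (4 * m) := by
  refine Finset.mem_union_left _ <| Finset.mem_union_left _ <| Finset.mem_union_left _ <|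
    Finset.mem_image.mpr ⟨i, ?_, ?_⟩
  · simp only [Finset.mem_Icc]
    omega
  · simp only [Prod.mk.injEq, true_and]
    omega

theorem mem_E1_of_add_eq_right (hi : 2 * m ≤ i) (hi' : i < 3 * m) (hij : i + j = 6 * m) :
    (i, j) ∈ E1 (4 * m) := by
  refine Finset.mem_union_left _ <| Finset.mem_union_right _ <|
    Finset.mem_image.mpr ⟨i - 2 * m, ?_, ?_⟩
  · simp only [Finset.mem_Icc]
    omega
  · simp only [Prod.mk.injEq]
    omega

end Laminated

theorem add_one_le_card_cutEdges_Icc {m x ℓ : ℕ} (hℓ : ℓ < m) (hx : 1 ≤ x) (hxn : x + ℓ ≤ 4 * m) :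
    ℓ + 1 ≤ (cutEdges (E1 (4 * m) ∪ E2 (4 * m)) (Finset.Icc x (x + ℓ))).card := by
  have hcard : (Finset.Icc x (x + ℓ)).card = ℓ + 1 := by
    rw [Nat.card_Icc]
    omega
  by_cases hleft : x + ℓ ≤ 2 * m
  · rw [← hcard]
    refine card_le_card_cutEdges_of_fst (g := fun a => 4 * m + 1 - a)
      (fun a ha => ?_) (fun a ha => ?_) <;> simp only [Finset.mem_Icc] at ha
    · exact Finset.mem_union_right _ (mem_E2_of_add_eq (by omega) (by omega) (by omega))
    · simp only [IsCut, Finset.mem_Icc]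
      omega
  by_cases hright : 2 * m < x
  · rw [← hcard]
    refine card_le_card_cutEdges_of_snd (g := fun b => 4 * m + 1 - b)
      (fun b hb => ?_) (fun b hb => ?_) <;> simp only [Finset.mem_Icc] at hb
    · exact Finset.mem_union_right _ (mem_E2_of_add_eq (by omega) (by omega) (by omega))
    · simp only [IsCut, Finset.mem_Icc]
      omega
  -- `[1, 2m + 1 - x]` is the mirror image of the left part `[x, 2m]` under `i ↦ 2m + 1 - i`
  let s := Finset.Icc 1 (2 * m + 1 - x) ∪ Finset.Icc (2 * m + 1) (x + ℓ)
  have hs : s.card = ℓ + 1 := by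
    rw [Finset.card_union_of_disjoint, Nat.card_Icc, Nat.card_Icc]
    · omega
    · exact Finset.disjoint_left.mpr fun a ha ha' => by
        simp only [Finset.mem_Icc] at ha ha'
        omega
  rw [← hs]
  refine card_le_card_cutEdges_of_fst
    (g := fun a => if a ≤ m then 2 * m + 1 - a else 6 * m - a) (fun a ha => ?_) (fun a ha => ?_) <;>
    simp only [s, Finset.mem_union, Finset.mem_Icc] at ha <;> split_ifs with ha'
  · exact Finset.mem_union_left _ (mem_E1_of_add_eq_left (by omega) ha' (by omega))
  · exact Finset.mem_union_left _ (mem_E1_of_add_eq_right (by omega) (by omega) (by omega))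
  all_goals simp only [IsCut, Finset.mem_Icc]; omega

/-- Every interval `I = [x, x+ℓ]` with `n/8 < ℓ < n/4` cuts `Ω(ℓ)` edges of
`E₁ ∪ E₂`: there is a universal constant `c > 0` such that the number of edges
with exactly one endpoint in `I` is at least `c·ℓ`. -/
theorem stmt_14 :
    ∃ c : ℝ, 0 < c ∧
      ∀ n x ℓ : ℕ, 4 ∣ n → n < 8 * ℓ → 4 * ℓ < n → 1 ≤ x → x + ℓ ≤ n →
        c * ℓ ≤
          (((E1 n ∪ E2 n).filter fun e =>
              (e.1 ∈ Finset.Icc x (x + ℓ) ∧ e.2 ∉ Finset.Icc x (x + ℓ)) ∨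
              (e.1 ∉ Finset.Icc x (x + ℓ) ∧ e.2 ∈ Finset.Icc x (x + ℓ))).card
            : ℝ) := by
  refine ⟨1, one_pos, fun n x ℓ h4 _ hℓ hx hxn => ?_⟩
  obtain ⟨m, rfl⟩ := h4
  have h := add_one_le_card_cutEdges_Icc (by omega) hx hxn
  rw [one_mul]
  exact_mod_cast (Nat.le_succ ℓ).trans h
end

section
/- Any binary search tree on {1,…,n} can be transformed into any other binary search tree on {1,…,n} by a finite sequence of rotations. -/
/-- A single (left or right) rotation at some node of the tree. -/
inductive Rot : BTree → BTree → Prop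
  | rotRight (A B C : BTree) (x y : ℕ) :
      Rot (.node (.node A x B) y C) (.node A x (.node B y C))
  | rotLeft (A B C : BTree) (x y : ℕ) :
      Rot (.node A x (.node B y C)) (.node (.node A x B) y C)
  | congLeft {l l' : BTree} (v : ℕ) (r : BTree) :
      Rot l l' → Rot (.node l v r) (.node l' v r)
  | congRight {r r' : BTree} (v : ℕ) (l : BTree) :
      Rot r r' → Rot (.node l v r) (.node l v r')

/-!
Right rotations at the root push the whole left subtree down the right spine, so every tree is
connected to the right comb (every left child a leaf) on its in-order list. Rotations are
reversible, so any two trees with the same in-order traversal, in particular any two BSTs on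
`{1,…,n}`, meet at that comb.
-/

open Relation

def BTree.rightComb : List ℕ → BTree
  | [] => .leaf
  | x :: xs => .node .leaf x (rightComb xs)

namespace Rot

theorem symm {a b : BTree} (h : Rot a b) : Rot b a := by
  induction h with
  | rotRight A B C x y => exact .rotLeft A B C x y
  | rotLeft A B C x y => exact .rotRight A B C x y
  | congLeft v r _ ih => exact .congLeft v r ih
  | congRight v l _ ih => exact .congRight v l ih

instance : Std.Symm Rot := ⟨fun _ _ => symm⟩

theorem reflTransGen_congRight (v : ℕ) (l : BTree) {r r' : BTree}
    (h : ReflTransGen Rot r r') : ReflTransGen Rot (.node l v r) (.node l v r') :=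
  ReflTransGen.lift (BTree.node l v) (fun _ _ => congRight v l) _ _ h

theorem reflTransGen_node_rightComb :
    ∀ (l : BTree) (v : ℕ) (xs : List ℕ),
      ReflTransGen Rot (.node l v (.rightComb xs)) (.rightComb (l.inorder ++ v :: xs))
  | .leaf, _, _ => .refl
  | .node A x B, v, xs => by
    have hB := reflTransGen_congRight x A (reflTransGen_node_rightComb B v xs)
    have hA := reflTransGen_node_rightComb A x (B.inorder ++ v :: xs)
    simpa only [BTree.inorder, List.append_assoc, List.cons_append] using
      ReflTransGen.head (rotRight A B _ x v) (hB.trans hA)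

theorem reflTransGen_rightComb_inorder :
    ∀ t : BTree, ReflTransGen Rot t (.rightComb t.inorder)
  | .leaf => .refl
  | .node l v r =>
    (reflTransGen_congRight v l (reflTransGen_rightComb_inorder r)).trans
      (reflTransGen_node_rightComb l v r.inorder)

theorem reflTransGen_of_inorder_eq {t t' : BTree} (h : t.inorder = t'.inorder) :
    ReflTransGen Rot t t' := by
  have ht := reflTransGen_rightComb_inorder t
  rw [h] at ht
  exact ht.trans (Std.Symm.symm _ _ (reflTransGen_rightComb_inorder t'))

end Rot

/-- Any BST on `{1,…,n}` can be transformed into any other BST on `{1,…,n}`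
by a finite sequence of rotations. -/
theorem stmt_16 (n : ℕ) (t t' : BTree) (h : IsBST n t) (h' : IsBST n t') :
    Relation.ReflTransGen Rot t t' :=
  Rot.reflTransGen_of_inorder_eq (h.trans h'.symm)
end
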